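/- Let V be a left-commutative algebra, i.e., x∘(y∘z) = y∘(x∘z) for all x,y,z ∈ V. Then for all coefficients of formal distributions a(z), b(z), c(z) over V, all N, n ∈ ℤ₊ and k, m ∈ ℤ: Σ_{t≥0}(−1)^t C(N,t) a_{k−t} ∘ ( Σ_{s≥0}(−1)^s C(n,s) b_{n−s}∘c_{m+t+s} ) = Σ_{s≥0}(−1)^s C(n,s) b_{n−s} ∘ ( Σ_{t≥0}(−1)^t C(N,t) a_{k−t}∘c_{m+s+t} ). In particular, if Σ_{t≥0}(−1)^t C(N,t) a_{k−t}∘c_{l+t} = 0 for all k,l, then Σ_{t≥0}(−1)^t C(N,t) a_{k−t}∘(b₍ₙ₎c)_{m+t} = 0 for all k,m. -/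

import Mathlib

variable {k V : Type*} [Field k] [CharZero k] [AddCommGroup V] [Module k V]

/-- The `n`-th product coefficient `(b₍ₙ₎c)_l = Σ_{s≥0} (−1)^s C(n,s) b_{n−s} ∘ c_{l+s}`. -/
def nProdCoef (mul : V →ₗ[k] V →ₗ[k] V) (b c : ℤ → V) (n : ℕ) (l : ℤ) : V :=
  ∑ s ∈ Finset.range (n + 1),
    ((-1) ^ s * (n.choose s) : ℤ) • mul (b ((n : ℤ) - (s : ℤ))) (c (l + (s : ℤ)))

theorem sum_zsmul_mul_sum_zsmul_mul_comm_of_left_comm {R M ι κ : Type*} [CommSemiring R]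
    [AddCommGroup M] [Module R M] (mul : M →ₗ[R] M →ₗ[R] M)
    (lcom : ∀ x y z : M, mul x (mul y z) = mul y (mul x z))
    (S : Finset ι) (T : Finset κ) (α : ι → ℤ) (β : κ → ℤ) (x : ι → M) (y : κ → M)
    (z : ι → κ → M) :
    ∑ i ∈ S, α i • mul (x i) (∑ j ∈ T, β j • mul (y j) (z i j)) =
      ∑ j ∈ T, β j • mul (y j) (∑ i ∈ S, α i • mul (x i) (z i j)) := by
  simp only [map_sum, map_zsmul, Finset.smul_sum]
  rw [Finset.sum_comm]
  refine Finset.sum_congr rfl fun j _ => Finset.sum_congr rfl fun i _ => ?_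
  rw [smul_comm, lcom]

/-- Let `V` be a left-commutative algebra, `x∘(y∘z) = y∘(x∘z)`. Then the double sums
appearing in the Dong Lemma computation can be interchanged; in particular, if
`Σ_t (−1)^t C(N,t) a_{k−t} ∘ c_{l+t} = 0` for all `k, l`, then
`Σ_t (−1)^t C(N,t) a_{k−t} ∘ (b₍ₙ₎c)_{m+t} = 0` for all `k, m`. -/
theorem stmt_12 (mul : V →ₗ[k] V →ₗ[k] V)
    (lcom : ∀ x y z : V, mul x (mul y z) = mul y (mul x z)) :
    (∀ (N n : ℕ) (j m : ℤ) (a b c : ℤ → V),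
      ∑ t ∈ Finset.range (N + 1), ((-1) ^ t * (N.choose t) : ℤ) •
          mul (a (j - (t : ℤ)))
            (∑ s ∈ Finset.range (n + 1), ((-1) ^ s * (n.choose s) : ℤ) •
              mul (b ((n : ℤ) - (s : ℤ))) (c (m + (t : ℤ) + (s : ℤ))))
        =
      ∑ s ∈ Finset.range (n + 1), ((-1) ^ s * (n.choose s) : ℤ) •
          mul (b ((n : ℤ) - (s : ℤ)))
            (∑ t ∈ Finset.range (N + 1), ((-1) ^ t * (N.choose t) : ℤ) •
              mul (a (j - (t : ℤ))) (c (m + (s : ℤ) + (t : ℤ))))) ∧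
    (∀ (N n : ℕ) (a b c : ℤ → V),
      (∀ j l : ℤ, ∑ t ∈ Finset.range (N + 1), ((-1) ^ t * (N.choose t) : ℤ) •
          mul (a (j - (t : ℤ))) (c (l + (t : ℤ))) = 0) →
      ∀ j m : ℤ, ∑ t ∈ Finset.range (N + 1), ((-1) ^ t * (N.choose t) : ℤ) •
          mul (a (j - (t : ℤ))) (nProdCoef mul b c n (m + (t : ℤ))) = 0) := by
  refine ⟨fun N n j m a b c => ?_, fun N n a b c hac j m => ?_⟩
  · rw [sum_zsmul_mul_sum_zsmul_mul_comm_of_left_comm mul lcom]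
    simp only [add_right_comm m]
  · simp only [nProdCoef]
    rw [sum_zsmul_mul_sum_zsmul_mul_comm_of_left_comm mul lcom]
    simp only [add_right_comm m]
    exact Finset.sum_eq_zero fun s _ => by rw [hac j (m + s), map_zero, smul_zero]
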